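/- arXiv:1610.08320 — 9 statements merged into one kernel-verified Lean document; each statement's English description precedes it below -/
import Mathlib

section
/- The 2x2 matrix K(x) = I + k(x) B, where k(x) = (x^2-1)/(t_0^{-1/2}x^2 - (u_0^{1/2}-u_0^{-1/2})x - t_0^{1/2}) and B = [[-t_0^{1/2}, ξ^{-1}t_0^{-1/2}],[ξ t_0^{1/2}, -t_0^{-1/2}]], satisfies the unitarity condition K(x) K(x^{-1}) = I whenever the denominators are nonzero. -/
open Matrix

/-- The left boundary matrix `B`; `st0 = t_0^{1/2}`, `ξ` the fugacity. -/
noncomputable def Bmat (st0 ξ : ℂ) : Matrix (Fin 2) (Fin 2) ℂ :=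
  !![-st0, ξ⁻¹ * st0⁻¹;
     ξ * st0, -st0⁻¹]

/-- `k(x) = (x² - 1)/(t_0^{-1/2} x² - (u_0^{1/2} - u_0^{-1/2}) x - t_0^{1/2})`;
`su0 = u_0^{1/2}`. -/
noncomputable def kFun (st0 su0 x : ℂ) : ℂ :=
  (x ^ 2 - 1) / (st0⁻¹ * x ^ 2 - (su0 - su0⁻¹) * x - st0)

/-- `K(x) = 1 + k(x) B`. -/
noncomputable def Kmat (st0 su0 ξ x : ℂ) : Matrix (Fin 2) (Fin 2) ℂ :=
  1 + kFun st0 su0 x • Bmat st0 ξ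

lemma Bsq (st0 ξ : ℂ) (ht0 : st0 ≠ 0) (hξ : ξ ≠ 0) :
    Bmat st0 ξ * Bmat st0 ξ = (-(st0 + st0⁻¹)) • Bmat st0 ξ := by
  unfold Bmat
  ext i j
  fin_cases i <;> fin_cases j <;>
    simp [Matrix.mul_apply, Fin.sum_univ_succ] <;> field_simp <;> ring

lemma hEaux (st0 su0 x : ℂ) (hx : x ≠ 0)
    (h2 : st0⁻¹ * x⁻¹ ^ 2 - (su0 - su0⁻¹) * x⁻¹ - st0 ≠ 0) :
    st0⁻¹ - (su0 - su0⁻¹) * x - st0 * x ^ 2 ≠ 0 := by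
  intro h; apply h2
  have : st0⁻¹ * x⁻¹ ^ 2 - (su0 - su0⁻¹) * x⁻¹ - st0
      = (st0⁻¹ - (su0 - su0⁻¹) * x - st0 * x ^ 2) * (x⁻¹ ^ 2) := by
    have hxx : x * x⁻¹ = 1 := mul_inv_cancel₀ hx
    linear_combination ((su0 - su0⁻¹) * x⁻¹ + st0 * (x * x⁻¹ + 1)) * hxx
  rw [this, h, zero_mul]

lemma kInv (st0 su0 x : ℂ) (ht0 : st0 ≠ 0) (hu0 : su0 ≠ 0) (hx : x ≠ 0)
    (h2 : st0⁻¹ * x⁻¹ ^ 2 - (su0 - su0⁻¹) * x⁻¹ - st0 ≠ 0) :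
    kFun st0 su0 x⁻¹ = (1 - x ^ 2) / (st0⁻¹ - (su0 - su0⁻¹) * x - st0 * x ^ 2) := by
  unfold kFun
  rw [div_eq_div_iff h2 (hEaux st0 su0 x hx h2)]
  field_simp [ht0, hu0, hx]

/-- Boundary unitarity: `K(x) K(x⁻¹) = 1` whenever the denominators are nonzero. -/
theorem stmt2 (st0 su0 ξ x : ℂ) (ht0 : st0 ≠ 0) (hu0 : su0 ≠ 0) (hξ : ξ ≠ 0) (hx : x ≠ 0)
    (h1 : st0⁻¹ * x ^ 2 - (su0 - su0⁻¹) * x - st0 ≠ 0)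
    (h2 : st0⁻¹ * x⁻¹ ^ 2 - (su0 - su0⁻¹) * x⁻¹ - st0 ≠ 0) :
    Kmat st0 su0 ξ x * Kmat st0 su0 ξ x⁻¹ = 1 := by
  set a := kFun st0 su0 x with ha
  set b := kFun st0 su0 x⁻¹ with hb
  have hE := hEaux st0 su0 x hx h2
  have haD : a * (st0⁻¹ * x ^ 2 - (su0 - su0⁻¹) * x - st0) = x ^ 2 - 1 := by
    rw [ha]; unfold kFun; exact div_mul_cancel₀ _ h1
  have hbE : b * (st0⁻¹ - (su0 - su0⁻¹) * x - st0 * x ^ 2) = 1 - x ^ 2 := by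
    rw [hb, kInv st0 su0 x ht0 hu0 hx h2]; exact div_mul_cancel₀ _ hE
  have hk : b + (a + a * b * -(st0 + st0⁻¹)) = 0 := by
    apply mul_right_cancel₀ (mul_ne_zero h1 hE)
    rw [zero_mul]
    linear_combination ((st0⁻¹ - (su0 - su0⁻¹) * x - st0 * x ^ 2)
        - (st0 + st0⁻¹) * (b * (st0⁻¹ - (su0 - su0⁻¹) * x - st0 * x ^ 2))) * haD
      + ((st0⁻¹ * x ^ 2 - (su0 - su0⁻¹) * x - st0)
        - (st0 + st0⁻¹) * (x ^ 2 - 1)) * hbE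
  unfold Kmat
  rw [add_mul, mul_add, mul_add, smul_mul_smul_comm, Bsq st0 ξ ht0 hξ, smul_smul]
  simp only [one_mul, mul_one]
  rw [add_assoc, ← add_smul, ← add_smul, hk, zero_smul, add_zero]
end

section
/- With \check{R}_1(x) = \check{R}(x) ⊗ I acting on ℂ^2 ⊗ ℂ^2 and K_1(x) = K(x) ⊗ I with K(x) the boundary matrix, the reflection equation holds: \check{R}_1(x_2/x_1) K_1(x_2) \check{R}_1(x_1 x_2) K_1(x_1) = K_1(x_1) \check{R}_1(x_1 x_2) K_1(x_2) \check{R}_1(x_2/x_1), for generic x_1, x_2. -/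
open Matrix Kronecker

/-!
Both `Ř(x) = 1 + r(x) w` and `K₁(x) = 1 + k(x) B₁` (with `B₁ = B ⊗ I`) are perturbations of the identity
by an element satisfying a quadratic relation: `w² = -(t^{1/2} + t^{-1/2}) w` and
`B₁² = -(t₀^{1/2} + t₀^{-1/2}) B₁`. Moreover `w` has rank one, so `w B₁ w` is a scalar multiple of `w`.
In any algebra with these three relations, both sides of the reflection equation expand to the same
combination of `1, w, B₁, B₁ w B₁` plus a multiple of `w B₁` resp. `B₁ w`, so their difference is a
scalar multiple of the commutator `[w, B₁]`. That scalar is a rational function of `x₁, x₂` and the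
parameters which vanishes identically.
-/

/-- The matrix `w` on ℂ² ⊗ ℂ² (product basis); `st = t^{1/2}`. -/
noncomputable def wMatP (st : ℂ) : Matrix (Fin 2 × Fin 2) (Fin 2 × Fin 2) ℂ :=
  Matrix.single (0, 1) (0, 1) (-st⁻¹) + Matrix.single (0, 1) (1, 0) st
    + Matrix.single (1, 0) (0, 1) st⁻¹ + Matrix.single (1, 0) (1, 0) (-st)

/-- `r(x) = (x - 1)/(t^{-1/2} x - t^{1/2})`. -/
noncomputable def rFun (st x : ℂ) : ℂ := (x - 1) / (st⁻¹ * x - st)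

/-- `Ř₁(x) = 1 + r(x) w` acting on ℂ² ⊗ ℂ². -/
noncomputable def RcheckP (st x : ℂ) : Matrix (Fin 2 × Fin 2) (Fin 2 × Fin 2) ℂ :=
  1 + rFun st x • wMatP st

/-- `K₁(x) = K(x) ⊗ I` acting on ℂ² ⊗ ℂ². -/
noncomputable def K1 (st0 su0 ξ x : ℂ) : Matrix (Fin 2 × Fin 2) (Fin 2 × Fin 2) ℂ :=
  Kmat st0 su0 ξ x ⊗ₖ (1 : Matrix (Fin 2) (Fin 2) ℂ)

section HeckeRelations

variable {k A : Type*} [CommRing k] [Ring A] [Algebra k A]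

def reflectionDefect (α β γ a b c d : k) : k :=
  a * b + a * d + c * d - b * c + α * a * c * d + β * a * b * d + γ * a * b * c * d

theorem reflection_sub_eq_smul_commutator {W B : A} {α β γ : k} (a b c d : k)
    (hW : W * W = α • W) (hB : B * B = β • B) (hWBW : W * B * W = γ • W) :
    (1 + a • W) * (1 + b • B) * (1 + c • W) * (1 + d • B)
        - (1 + d • B) * (1 + c • W) * (1 + b • B) * (1 + a • W)
      = reflectionDefect α β γ a b c d • (W * B - B * W) := by
  -- `simp` keeps products left-associated, so the relations are needed behind any left factor.
  have hW' : ∀ x : A, x * W * W = α • (x * W) := fun x => by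
    rw [mul_assoc, hW, mul_smul_comm]
  have hB' : ∀ x : A, x * B * B = β • (x * B) := fun x => by
    rw [mul_assoc, hB, mul_smul_comm]
  have hWBW' : ∀ x : A, x * W * B * W = γ • (x * W) := fun x => by
    rw [mul_assoc, mul_assoc, ← mul_assoc W, hWBW, mul_smul_comm]
  simp only [mul_add, add_mul, one_mul, mul_one, smul_mul_assoc, mul_smul_comm,
    hW, hB, hWBW, hW', hB', hWBW', smul_smul]
  rw [reflectionDefect]
  module

end HeckeRelations

theorem wMatP_mul_self (st : ℂ) : wMatP st * wMatP st = -(st + st⁻¹) • wMatP st := by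
  ext ⟨i, j⟩ ⟨k, l⟩
  fin_cases i <;> fin_cases j <;> fin_cases k <;> fin_cases l <;>
    simp [wMatP, Matrix.mul_apply, Fintype.sum_prod_type, Matrix.single_apply] <;> ring

/-- `w = u vᵀ` with `u = e₁₀ - e₀₁` and `v = t^{-1/2} e₀₁ - t^{1/2} e₁₀`, so `w M w = (vᵀ M u) w`. -/
theorem wMatP_mul_kronecker_one_mul_wMatP (st : ℂ) (M : Matrix (Fin 2) (Fin 2) ℂ) :
    wMatP st * (M ⊗ₖ 1) * wMatP st = -(st⁻¹ * M 0 0 + st * M 1 1) • wMatP st := by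
  ext ⟨i, j⟩ ⟨k, l⟩
  fin_cases i <;> fin_cases j <;> fin_cases k <;> fin_cases l <;>
    simp [wMatP, Matrix.mul_apply, Fintype.sum_prod_type, Matrix.single_apply,
      Matrix.one_apply] <;> ring

theorem Bmat_mul_self (st0 : ℂ) {ξ : ℂ} (hξ : ξ ≠ 0) :
    Bmat st0 ξ * Bmat st0 ξ = -(st0 + st0⁻¹) • Bmat st0 ξ := by
  ext i j
  fin_cases i <;> fin_cases j <;> simp [Bmat, Matrix.mul_apply, Fin.sum_univ_two] <;>
    field_simp <;> ring

theorem Bmat_kronecker_one_mul_self (st0 : ℂ) {ξ : ℂ} (hξ : ξ ≠ 0) :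
    (Bmat st0 ξ ⊗ₖ (1 : Matrix (Fin 2) (Fin 2) ℂ)) * (Bmat st0 ξ ⊗ₖ 1)
      = -(st0 + st0⁻¹) • (Bmat st0 ξ ⊗ₖ (1 : Matrix (Fin 2) (Fin 2) ℂ)) := by
  rw [← mul_kronecker_mul, Bmat_mul_self st0 hξ, one_mul, smul_kronecker]

theorem wMatP_mul_Bmat_kronecker_one_mul_wMatP (st st0 ξ : ℂ) :
    wMatP st * (Bmat st0 ξ ⊗ₖ 1) * wMatP st = (st⁻¹ * st0 + st * st0⁻¹) • wMatP st := by
  rw [wMatP_mul_kronecker_one_mul_wMatP]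
  congr 1
  simp only [Bmat, of_apply, cons_val', cons_val_zero, cons_val_one, empty_val',
    cons_val_fin_one]
  ring

theorem K1_eq (st0 su0 ξ x : ℂ) :
    K1 st0 su0 ξ x = 1 + kFun st0 su0 x • (Bmat st0 ξ ⊗ₖ (1 : Matrix (Fin 2) (Fin 2) ℂ)) := by
  rw [K1, Kmat, add_kronecker, smul_kronecker, one_kronecker_one]

theorem rFun_eq_div {st : ℂ} (ht : st ≠ 0) (x : ℂ) :
    rFun st x = st * (x - 1) / (x - st ^ 2) := by
  rw [rFun, ← mul_div_mul_left _ _ ht]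
  congr 1
  field_simp

theorem kFun_eq_div {st0 su0 : ℂ} (ht0 : st0 ≠ 0) (hu0 : su0 ≠ 0) (x : ℂ) :
    kFun st0 su0 x
      = st0 * su0 * (x ^ 2 - 1) / (su0 * x ^ 2 - st0 * (su0 ^ 2 - 1) * x - st0 ^ 2 * su0) := by
  rw [kFun, ← mul_div_mul_left _ _ (mul_ne_zero ht0 hu0)]
  congr 1
  field_simp

theorem reflectionDefect_rFun_kFun_eq_zero {st st0 su0 x1 x2 : ℂ}
    (ht : st ≠ 0) (ht0 : st0 ≠ 0) (hu0 : su0 ≠ 0) (h1 : x1 ≠ 0)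
    (hr1 : st⁻¹ * (x2 / x1) - st ≠ 0) (hr2 : st⁻¹ * (x1 * x2) - st ≠ 0)
    (hk1 : st0⁻¹ * x1 ^ 2 - (su0 - su0⁻¹) * x1 - st0 ≠ 0)
    (hk2 : st0⁻¹ * x2 ^ 2 - (su0 - su0⁻¹) * x2 - st0 ≠ 0) :
    reflectionDefect (-(st + st⁻¹)) (-(st0 + st0⁻¹)) (st⁻¹ * st0 + st * st0⁻¹)
      (rFun st (x2 / x1)) (kFun st0 su0 x2) (rFun st (x1 * x2)) (kFun st0 su0 x1) = 0 := by
  have hz1 : x2 - st ^ 2 * x1 ≠ 0 := by contrapose! hr1; field_simp; linear_combination hr1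
  have hz2 : x1 * x2 - st ^ 2 ≠ 0 := by contrapose! hr2; field_simp; linear_combination hr2
  have hq1 : su0 * x1 ^ 2 - st0 * (su0 ^ 2 - 1) * x1 - st0 ^ 2 * su0 ≠ 0 := by
    contrapose! hk1; field_simp; linear_combination hk1
  have hq2 : su0 * x2 ^ 2 - st0 * (su0 ^ 2 - 1) * x2 - st0 ^ 2 * su0 ≠ 0 := by
    contrapose! hk2; field_simp; linear_combination hk2
  rw [reflectionDefect, rFun_eq_div ht, rFun_eq_div ht, kFun_eq_div ht0 hu0, kFun_eq_div ht0 hu0]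
  -- `field_simp` can only use the nonvanishing facts once they are in its own normal form.
  field_simp at hz1 hz2 hq1 hq2 ⊢
  ring

theorem stmt3_general (st st0 su0 ξ x1 x2 : ℂ) (ht : st ≠ 0) (ht0 : st0 ≠ 0) (hu0 : su0 ≠ 0)
    (hξ : ξ ≠ 0) (h1 : x1 ≠ 0)
    (hr1 : st⁻¹ * (x2 / x1) - st ≠ 0)
    (hr2 : st⁻¹ * (x1 * x2) - st ≠ 0)
    (hk1 : st0⁻¹ * x1 ^ 2 - (su0 - su0⁻¹) * x1 - st0 ≠ 0)
    (hk2 : st0⁻¹ * x2 ^ 2 - (su0 - su0⁻¹) * x2 - st0 ≠ 0) :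
    RcheckP st (x2 / x1) * K1 st0 su0 ξ x2 * RcheckP st (x1 * x2) * K1 st0 su0 ξ x1
      = K1 st0 su0 ξ x1 * RcheckP st (x1 * x2) * K1 st0 su0 ξ x2 * RcheckP st (x2 / x1) := by
  rw [← sub_eq_zero, K1_eq, K1_eq, RcheckP, RcheckP,
    reflection_sub_eq_smul_commutator _ _ _ _ (wMatP_mul_self st)
      (Bmat_kronecker_one_mul_self st0 hξ) (wMatP_mul_Bmat_kronecker_one_mul_wMatP st st0 ξ),
    reflectionDefect_rFun_kFun_eq_zero ht ht0 hu0 h1 hr1 hr2 hk1 hk2, zero_smul]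

/-- The reflection equation
`Ř₁(x₂/x₁) K₁(x₂) Ř₁(x₁x₂) K₁(x₁) = K₁(x₁) Ř₁(x₁x₂) K₁(x₂) Ř₁(x₂/x₁)`
for generic `x₁, x₂` (all denominators nonzero). -/
theorem stmt3 (st st0 su0 ξ x1 x2 : ℂ) (ht : st ≠ 0) (ht0 : st0 ≠ 0) (hu0 : su0 ≠ 0)
    (hξ : ξ ≠ 0) (h1 : x1 ≠ 0) (h2 : x2 ≠ 0)
    (hr1 : st⁻¹ * (x2 / x1) - st ≠ 0)
    (hr2 : st⁻¹ * (x1 * x2) - st ≠ 0)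
    (hk1 : st0⁻¹ * x1 ^ 2 - (su0 - su0⁻¹) * x1 - st0 ≠ 0)
    (hk2 : st0⁻¹ * x2 ^ 2 - (su0 - su0⁻¹) * x2 - st0 ≠ 0) :
    RcheckP st (x2 / x1) * K1 st0 su0 ξ x2 * RcheckP st (x1 * x2) * K1 st0 su0 ξ x1
      = K1 st0 su0 ξ x1 * RcheckP st (x1 * x2) * K1 st0 su0 ξ x2 * RcheckP st (x2 / x1) :=
  stmt3_general st st0 su0 ξ x1 x2 ht ht0 hu0 hξ h1 hr1 hr2 hk1 hk2
end

section
/- In the Noumi representation, the operator T_N = t_N^{1/2} + t_N^{-1/2}((c x_N - 1)(d x_N - 1)/(x_N(x_N - x_N^{-1})))(1 - s_N), where s_N inverts the variable x_N, satisfies the quadratic relation (T_N - t_N^{1/2})(T_N + t_N^{-1/2}) = 0 on Laurent polynomials. -/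
noncomputable def heckeTN {K : Type*} [Field K] (stN suN x : K) (σ : K ≃+* K)
    (f : K) : K :=
  stN * f + stN⁻¹ * (((stN * suN) * x - 1) * ((-(stN * suN⁻¹)) * x - 1)
      / (x * (x - x⁻¹))) * (f - σ f)

/-- The quadratic Hecke relation `(T_N - t_N^{1/2})(T_N + t_N^{-1/2}) = 0`, i.e.
`T_N² = (t_N^{1/2} - t_N^{-1/2}) T_N + 1`, on Laurent polynomials
(elements of the field `K` of rational functions). -/
theorem stmt5 {K : Type*} [Field K] (stN suN x : K) (σ : K ≃+* K)
    (hstN : stN ≠ 0) (hsuN : suN ≠ 0) (hx : x ≠ 0) (hx2 : x ^ 2 ≠ 1)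
    (hσinv : ∀ f : K, σ (σ f) = f) (hσx : σ x = x⁻¹)
    (hσt : σ stN = stN) (hσu : σ suN = suN)
    (f : K) :
    heckeTN stN suN x σ (heckeTN stN suN x σ f)
      = (stN - stN⁻¹) * heckeTN stN suN x σ f + f := by
  have h1 : x ^ 2 - 1 ≠ 0 := sub_ne_zero.mpr hx2
  set A : K := stN⁻¹ * (((stN * suN) * x - 1) * ((-(stN * suN⁻¹)) * x - 1)
      / (x * (x - x⁻¹))) with hAdef
  have hden : x * (x - x⁻¹) = x ^ 2 - 1 := by
    field_simp
  have hden2 : x⁻¹ * (x⁻¹ - x) = (x ^ 2 - 1) / (-(x ^ 2)) := by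
    field_simp; ring
  have hA : σ A = -(stN + stN⁻¹) - A := by
    rw [hAdef]
    simp only [map_mul, map_sub, map_neg, map_one, map_inv₀, map_div₀, hσx, hσt, hσu, inv_inv]
    rw [hden, hden2, div_div_eq_mul_div]
    have hD : -(stN * suN * x ^ 2) + stN * suN * x ^ 4 ≠ 0 := by
      have h : -(stN * suN * x ^ 2) + stN * suN * x ^ 4
          = stN * suN * x ^ 2 * (x ^ 2 - 1) := by ring
      rw [h]
      exact mul_ne_zero (mul_ne_zero (mul_ne_zero hstN hsuN) (pow_ne_zero 2 hx)) h1
    field_simp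
    ring
  have hT : ∀ g : K, heckeTN stN suN x σ g = stN * g + A * (g - σ g) := fun g => rfl
  have hσTf : σ (heckeTN stN suN x σ f) = stN * σ f + (σ A) * (σ f - f) := by
    rw [hT f]
    simp only [map_add, map_mul, map_sub, hσt, hσinv]
  rw [hT (heckeTN stN suN x σ f), hσTf, hA, hT f]
  field_simp
  ring
end

section
/- The operators T_i in the Noumi representation satisfy the braid relation T_i T_{i+1} T_i = T_{i+1} T_i T_{i+1} for 1 ≤ i ≤ N-2, as operators on Laurent polynomials in x_1,…,x_N. -/
open MvPolynomial

variable {F : Type*} [Field F]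

/-- The field of multivariate rational functions in `N` variables, in which the
Laurent polynomials embed. -/
abbrev RatField (F : Type*) [Field F] (N : ℕ) := FractionRing (MvPolynomial (Fin N) F)

/-- The variable `x_i` inside the field of rational functions. -/
noncomputable def Xvar {N : ℕ} (i : Fin N) : RatField F N :=
  algebraMap (MvPolynomial (Fin N) F) (RatField F N) (MvPolynomial.X i)

/-- The operator `s` exchanging the variables `x_i ↔ x_j`, extended to rational
functions. -/
noncomputable def swapVar {N : ℕ} (i j : Fin N) : RatField F N ≃+* RatField F N :=
  IsFractionRing.ringEquivOfRingEquiv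
    (MvPolynomial.renameEquiv F (Equiv.swap i j)).toRingEquiv

/-- A constant scalar inside the field of rational functions. -/
noncomputable def cst {N : ℕ} (c : F) : RatField F N :=
  algebraMap (MvPolynomial (Fin N) F) (RatField F N) (MvPolynomial.C c)

/-- The Noumi-representation Hecke operator
`T_i = t^{1/2} - ((t^{1/2} x_i - t^{-1/2} x_{i+1})/(x_i - x_{i+1})) (1 - s_i)`,
where `st = t^{1/2}`. -/
noncomputable def heckeT {N : ℕ} (st : F) (i j : Fin N) (f : RatField F N) :
    RatField F N :=
  cst st * f - ((cst st * Xvar i - cst st⁻¹ * Xvar j) / (Xvar i - Xvar j))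
      * (f - swapVar i j f)

section aux

variable {N : ℕ}

lemma swapVar_algebraMap (i j : Fin N) (p : MvPolynomial (Fin N) F) :
    swapVar i j (algebraMap (MvPolynomial (Fin N) F) (RatField F N) p)
      = algebraMap (MvPolynomial (Fin N) F) (RatField F N)
          (rename (Equiv.swap i j) p) := by
  simp [swapVar, IsFractionRing.ringEquivOfRingEquiv, IsLocalization.ringEquivOfRingEquiv_eq]
  exact IsLocalization.ringEquivOfRingEquiv_eq _ p

lemma swapVar_cst (i j : Fin N) (c : F) :
    swapVar i j (cst c : RatField F N) = cst c := by
  simp [cst, swapVar_algebraMap]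

lemma swapVar_Xvar (i j k : Fin N) :
    swapVar i j (Xvar k : RatField F N) = Xvar (Equiv.swap i j k) := by
  simp [Xvar, swapVar_algebraMap]

lemma swap_braid {i1 i2 i3 : Fin N} (h12 : i1 ≠ i2) (h13 : i1 ≠ i3) (h23 : i2 ≠ i3) :
    (Equiv.swap i1 i2 : Fin N → Fin N) ∘ (Equiv.swap i2 i3) ∘ (Equiv.swap i1 i2)
      = (Equiv.swap i2 i3 : Fin N → Fin N) ∘ (Equiv.swap i1 i2) ∘ (Equiv.swap i2 i3) := by
  funext x
  rcases eq_or_ne x i1 with rfl | hx1 <;> rcases eq_or_ne x i2 with rfl | hx2 <;>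
    rcases eq_or_ne x i3 with rfl | hx3 <;>
    simp_all [Equiv.swap_apply_of_ne_of_ne, Equiv.swap_apply_left, Equiv.swap_apply_right,
      h12.symm, h13.symm, h23.symm]

lemma swapVar_braid {i1 i2 i3 : Fin N} (h12 : i1 ≠ i2) (h13 : i1 ≠ i3)
    (h23 : i2 ≠ i3) (f : RatField F N) :
    swapVar i1 i2 (swapVar i2 i3 (swapVar i1 i2 f))
      = swapVar i2 i3 (swapVar i1 i2 (swapVar i2 i3 f)) := by
  have key : ((swapVar i1 i2 : RatField F N ≃+* RatField F N) : RatField F N →+* RatField F N).comp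
      (((swapVar i2 i3 : RatField F N ≃+* RatField F N) : RatField F N →+* RatField F N).comp
        ((swapVar i1 i2 : RatField F N ≃+* RatField F N) : RatField F N →+* RatField F N))
      = ((swapVar i2 i3 : RatField F N ≃+* RatField F N) : RatField F N →+* RatField F N).comp
      (((swapVar i1 i2 : RatField F N ≃+* RatField F N) : RatField F N →+* RatField F N).comp
        ((swapVar i2 i3 : RatField F N ≃+* RatField F N) : RatField F N →+* RatField F N)) := by
    apply IsLocalization.ringHom_ext (nonZeroDivisors (MvPolynomial (Fin N) F))
    ext p
    · simp [RingHom.comp_apply, swapVar_algebraMap]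
    · simp only [RingHom.comp_apply, RingHom.coe_coe, swapVar_algebraMap, rename_X]
      have := congrFun (swap_braid h12 h13 h23) p
      simp only [Function.comp_apply] at this
      rw [this]
  exact RingHom.congr_fun key f

lemma Xvar_ne {i j : Fin N} (h : i ≠ j) : (Xvar i : RatField F N) ≠ Xvar j := by
  intro hc
  exact h (MvPolynomial.X_injective
    (IsFractionRing.injective (MvPolynomial (Fin N) F) (RatField F N) hc))

lemma cst_ne_zero {c : F} (hc : c ≠ 0) : (cst c : RatField F N) ≠ 0 := by
  intro h
  exact hc (by simpa [cst] using h)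

lemma cst_mul (a b : F) : (cst a : RatField F N) * cst b = cst (a * b) := by
  rw [cst, cst, cst, ← map_mul, ← MvPolynomial.C_mul]

lemma cst_one : (cst 1 : RatField F N) = 1 := by
  simp [cst]

lemma cst_inv {c : F} (hc : c ≠ 0) : (cst c⁻¹ : RatField F N) = (cst c)⁻¹ := by
  apply eq_inv_of_mul_eq_one_left
  rw [cst_mul, inv_mul_cancel₀ hc, cst_one]


lemma swapVar_swapVar (i j : Fin N) (f : RatField F N) :
    swapVar i j (swapVar i j (f : RatField F N)) = f := by
  have key : ((swapVar i j : RatField F N ≃+* RatField F N) : RatField F N →+* RatField F N).comp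
      ((swapVar i j : RatField F N ≃+* RatField F N) : RatField F N →+* RatField F N)
      = RingHom.id (RatField F N) := by
    apply IsLocalization.ringHom_ext (nonZeroDivisors (MvPolynomial (Fin N) F))
    ext p
    · simp [RingHom.comp_apply, swapVar_algebraMap]
    · simp [RingHom.comp_apply, swapVar_algebraMap, rename_X]
  exact RingHom.congr_fun key f

end aux


lemma Tbase {K : Type*} [Field K] (s n d u v : K) (hd : d ≠ 0) :
    s * u - n / d * (u - v) = (s * u * d - n * (u - v)) / d := by
  field_simp

lemma Tfrac {K : Type*} [Field K] (s n d U D1 V D2 : K) (hd : d ≠ 0) (h1 : D1 ≠ 0)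
    (h2 : D2 ≠ 0) :
    s * (U / D1) - n / d * (U / D1 - V / D2)
      = (s * U * D2 * d - n * (U * D2 - V * D1)) / (D1 * D2 * d) := by
  field_simp

set_option maxHeartbeats 1000000 in
lemma braid_key {K : Type*} [Field K] (s w x y z f g1 g2 g12 g21 g121 : K)
    (hxy : x - y ≠ 0) (hxz : x - z ≠ 0) (hyz : y - z ≠ 0) :
    s *
        (s * (s * f - (s * x - w * y) / (x - y) * (f - g1)) -
          (s * y - w * z) / (y - z) *
            (s * f - (s * x - w * y) / (x - y) * (f - g1) - (s * g2 - (s * x - w * z) / (x - z) * (g2 - g21)))) -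
      (s * x - w * y) / (x - y) *
        (s * (s * f - (s * x - w * y) / (x - y) * (f - g1)) -
            (s * y - w * z) / (y - z) *
              (s * f - (s * x - w * y) / (x - y) * (f - g1) - (s * g2 - (s * x - w * z) / (x - z) * (g2 - g21))) -
          (s * (s * g1 - (s * y - w * x) / (y - x) * (g1 - f)) -
            (s * x - w * z) / (x - z) *
              (s * g1 - (s * y - w * x) / (y - x) * (g1 - f) -
                (s * g12 - (s * y - w * z) / (y - z) * (g12 - g121))))) =
    s *
        (s * (s * f - (s * y - w * z) / (y - z) * (f - g2)) -
          (s * x - w * y) / (x - y) *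
            (s * f - (s * y - w * z) / (y - z) * (f - g2) - (s * g1 - (s * x - w * z) / (x - z) * (g1 - g12)))) -
      (s * y - w * z) / (y - z) *
        (s * (s * f - (s * y - w * z) / (y - z) * (f - g2)) -
            (s * x - w * y) / (x - y) *
              (s * f - (s * y - w * z) / (y - z) * (f - g2) - (s * g1 - (s * x - w * z) / (x - z) * (g1 - g12))) -
          (s * (s * g2 - (s * z - w * y) / (z - y) * (g2 - f)) -
            (s * x - w * z) / (x - z) *
              (s * g2 - (s * z - w * y) / (z - y) * (g2 - f) -
                (s * g21 - (s * x - w * y) / (x - y) * (g21 - g121))))) := by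
  have hyx : y - x ≠ 0 := fun h => hxy (by linear_combination -h)
  have hzy : z - y ≠ 0 := fun h => hyz (by linear_combination -h)
  rw [Tbase s (s * x - w * y) (x - y) f g1 hxy,
      Tbase s (s * x - w * z) (x - z) g2 g21 hxz,
      Tbase s (s * y - w * x) (y - x) g1 f hyx,
      Tbase s (s * y - w * z) (y - z) g12 g121 hyz,
      Tbase s (s * y - w * z) (y - z) f g2 hyz,
      Tbase s (s * x - w * z) (x - z) g1 g12 hxz,
      Tbase s (s * z - w * y) (z - y) g2 f hzy,
      Tbase s (s * x - w * y) (x - y) g21 g121 hxy]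
  rw [Tfrac s (s * y - w * z) (y - z) _ (x - y) _ (x - z) hyz hxy hxz,
      Tfrac s (s * x - w * z) (x - z) _ (y - x) _ (y - z) hxz hyx hyz,
      Tfrac s (s * x - w * y) (x - y) _ (y - z) _ (x - z) hxy hyz hxz,
      Tfrac s (s * x - w * z) (x - z) _ (z - y) _ (x - y) hxz hzy hxy]
  rw [Tfrac s (s * x - w * y) (x - y) _ ((x - y) * (x - z) * (y - z)) _
        ((y - x) * (y - z) * (x - z)) hxy
        (mul_ne_zero (mul_ne_zero hxy hxz) hyz) (mul_ne_zero (mul_ne_zero hyx hyz) hxz),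
      Tfrac s (s * y - w * z) (y - z) _ ((y - z) * (x - z) * (x - y)) _
        ((z - y) * (x - y) * (x - z)) hyz
        (mul_ne_zero (mul_ne_zero hyz hxz) hxy) (mul_ne_zero (mul_ne_zero hzy hxy) hxz)]
  rw [div_eq_div_iff
      (mul_ne_zero (mul_ne_zero (mul_ne_zero (mul_ne_zero hxy hxz) hyz)
        (mul_ne_zero (mul_ne_zero hyx hyz) hxz)) hxy)
      (mul_ne_zero (mul_ne_zero (mul_ne_zero (mul_ne_zero hyz hxz) hxy)
        (mul_ne_zero (mul_ne_zero hzy hxy) hxz)) hyz)]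
  ring



set_option maxHeartbeats 4000000 in
set_option synthInstance.maxHeartbeats 400000 in
/-- The braid relation `T_i T_{i+1} T_i = T_{i+1} T_i T_{i+1}` (for `1 ≤ i ≤ N-2`,
i.e. for any three consecutive variables) in the Noumi representation, as
operators on Laurent polynomials (rational functions) in `x_1, …, x_N`. -/
theorem stmt6 {N : ℕ} (st : F) (hst : st ≠ 0) (i : ℕ) (hi : i + 2 < N)
    (f : RatField F N) :
    (let i1 : Fin N := ⟨i, by omega⟩
     let i2 : Fin N := ⟨i + 1, by omega⟩
     let i3 : Fin N := ⟨i + 2, hi⟩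
     heckeT st i1 i2 (heckeT st i2 i3 (heckeT st i1 i2 f))
       = heckeT st i2 i3 (heckeT st i1 i2 (heckeT st i2 i3 f))) := by
  intro i1 i2 i3
  have h12 : i1 ≠ i2 := by simp [i1, i2, Fin.ext_iff]
  have h13 : i1 ≠ i3 := by simp [i1, i3, Fin.ext_iff]
  have h23 : i2 ≠ i3 := by simp [i2, i3, Fin.ext_iff]
  have h21 : i2 ≠ i1 := h12.symm
  have h31 : i3 ≠ i1 := h13.symm
  have h32 : i3 ≠ i2 := h23.symm
  have hxy : (Xvar i1 : RatField F N) - Xvar i2 ≠ 0 := sub_ne_zero.mpr (Xvar_ne h12)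
  have hxz : (Xvar i1 : RatField F N) - Xvar i3 ≠ 0 := sub_ne_zero.mpr (Xvar_ne h13)
  have hyz : (Xvar i2 : RatField F N) - Xvar i3 ≠ 0 := sub_ne_zero.mpr (Xvar_ne h23)
  have hs : (cst st : RatField F N) ≠ 0 := cst_ne_zero hst
  simp only [heckeT, cst_inv hst, map_sub, map_mul, map_div₀, map_inv₀, swapVar_swapVar, swapVar_cst, swapVar_Xvar,
    Equiv.swap_apply_left, Equiv.swap_apply_right,
    Equiv.swap_apply_of_ne_of_ne h31 h32, Equiv.swap_apply_of_ne_of_ne h12 h13]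
  rw [swapVar_braid h12 h13 h23 f]
  set x := (Xvar i1 : RatField F N) with hx
  set y := (Xvar i2 : RatField F N) with hy
  set z := (Xvar i3 : RatField F N) with hz
  set s := (cst st : RatField F N) with hsdef
  set g1 := swapVar i1 i2 f with hg1
  set g2 := swapVar i2 i3 f with hg2
  set g12 := swapVar i1 i2 (swapVar i2 i3 f) with hg12
  set g21 := swapVar i2 i3 (swapVar i1 i2 f) with hg21
  set g121 := swapVar i2 i3 (swapVar i1 i2 (swapVar i2 i3 f)) with hg121
  exact braid_key s s⁻¹ x y z f g1 g2 g12 g21 g121 hxy hxz hyz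
end

section
/- In the q-oscillator algebra with relation a a† - t a† a = (1-t)·1, together with boundary vectors satisfying ⟨⟨w|(t_0^{1/2}a - t_0^{-1/2}a†) = (u_0^{1/2}-u_0^{-1/2})⟨⟨w| and (t_N^{1/2}a† - t_N^{-1/2}a)|v⟩⟩ = (u_N^{1/2}-u_N^{-1/2})|v⟩⟩, the column vector b(x) = (1/x + a, x + a†)^T and the right boundary matrix \bar{K}(x) = I + k(x^{-1}; t_N^{1/2}, u_N^{1/2}) \bar{B} satisfy \bar{K}(x) b(x) |v⟩⟩ = b(1/x) |v⟩⟩ (equality of vectors in ℂ^2 with Fock-space entries applied to |v⟩⟩). -/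
open Matrix

/-- Right boundary matrix `B̄` in Hecke parameters; `stN = t_N^{1/2}`. -/
noncomputable def BbarH (stN : ℂ) : Matrix (Fin 2) (Fin 2) ℂ :=
  !![-stN⁻¹, stN; stN⁻¹, -stN]

/-- `k(y; t_N^{1/2}, u_N^{1/2}) = (y² - 1)/(t_N^{-1/2} y² - (u_N^{1/2} - u_N^{-1/2}) y - t_N^{1/2})`. -/
noncomputable def kFunN (stN suN y : ℂ) : ℂ :=
  (y ^ 2 - 1) / (stN⁻¹ * y ^ 2 - (suN - suN⁻¹) * y - stN)

/-- `K̄(x) = 1 + k(x⁻¹; t_N^{1/2}, u_N^{1/2}) B̄`. -/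
noncomputable def KbarM (stN suN x : ℂ) : Matrix (Fin 2) (Fin 2) ℂ :=
  1 + kFunN stN suN x⁻¹ • BbarH stN

/-- The column vector of operators `b(x) = (x⁻¹ + a, x + a†)ᵀ`. -/
noncomputable def bVec {V : Type*} [AddCommGroup V] [Module ℂ V]
    (a ad : V →ₗ[ℂ] V) (x : ℂ) : Fin 2 → (V →ₗ[ℂ] V) :=
  ![x⁻¹ • LinearMap.id + a, x • LinearMap.id + ad]

/-- In the q-oscillator algebra `a a† - t a† a = (1-t)·1`, with boundary (co)vectors
`⟨⟨w|`, `|v⟩⟩` satisfying the stated boundary relations, the right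
Ghoshal–Zamolodchikov relation `K̄(x) b(x) |v⟩⟩ = b(1/x) |v⟩⟩` holds
(componentwise in ℂ², with entries acting on the Fock space vector `|v⟩⟩`). -/
theorem stmt10 {V : Type*} [AddCommGroup V] [Module ℂ V]
    (t st0 su0 stN suN x : ℂ) (a ad : V →ₗ[ℂ] V)
    (hosc : a ∘ₗ ad - t • (ad ∘ₗ a) = (1 - t) • (LinearMap.id : V →ₗ[ℂ] V))
    (w : V →ₗ[ℂ] ℂ)
    (hw : w ∘ₗ (st0 • a - st0⁻¹ • ad) = (su0 - su0⁻¹) • w)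
    (v : V)
    (hv : (stN • ad - stN⁻¹ • a) v = (suN - suN⁻¹) • v)
    (hstN : stN ≠ 0) (hsuN : suN ≠ 0) (hx : x ≠ 0)
    (hden : stN⁻¹ * x⁻¹ ^ 2 - (suN - suN⁻¹) * x⁻¹ - stN ≠ 0) :
    ∀ i : Fin 2,
      ∑ j : Fin 2, KbarM stN suN x i j • (bVec a ad x j) v = (bVec a ad x⁻¹ i) v := by
  have hD : ad v = (stN⁻¹ * stN⁻¹) • a v + (stN⁻¹ * (suN - suN⁻¹)) • v := by
    have h : stN • ad v - stN⁻¹ • a v = (suN - suN⁻¹) • v := by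
      simpa using hv
    have := congrArg (fun z => stN⁻¹ • z) h
    simp only [smul_sub, smul_smul, inv_mul_cancel₀ hstN, one_smul] at this
    rw [sub_eq_iff_eq_add] at this
    rw [this]; module
  have hk : kFunN stN suN x⁻¹ * (stN⁻¹ * x⁻¹ ^ 2 - (suN - suN⁻¹) * x⁻¹ - stN)
      = x⁻¹ ^ 2 - 1 := by
    rw [kFunN, div_mul_cancel₀ _ hden]
  set k := kFunN stN suN x⁻¹ with hkdef
  clear_value k
  have hk2 := hk
  field_simp at hk2
  have hk3 : k * (suN - stN * (suN ^ 2 - 1) * x - stN ^ 2 * suN * x ^ 2)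
      = stN * suN * (1 - x ^ 2) := by
    apply mul_left_cancel₀ (pow_ne_zero 3 hx)
    linear_combination (x ^ 3) * hk2
  intro i
  fin_cases i <;>
  · simp only [Fin.sum_univ_two, KbarM, BbarH, bVec, Matrix.add_apply, Matrix.one_apply,
      Matrix.smul_apply, Matrix.cons_val_zero, Matrix.cons_val_one, Matrix.head_cons,
      Matrix.head_fin_const, Matrix.of_apply, LinearMap.add_apply, LinearMap.smul_apply,
      LinearMap.id_apply, Fin.mk_zero, Fin.mk_one, Fin.isValue, smul_eq_mul,
      if_true, if_false]
    rw [hD]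
    match_scalars
    all_goals
      try norm_num
      try simp only [← hkdef]
      try field_simp
      first
      | ring1
      | linear_combination (stN ^ 2 * suN * x) * hk3
      | linear_combination (-stN) * hk3
      | linear_combination hk3
      | linear_combination (-1) * hk3
end

section
/- The vector |v⟩⟩ = Σ_{n≥0} v_n |n⟩⟩ with v_n = H_n(t_N^{1/2}u_N^{-1/2}, -t_N^{1/2}u_N^{1/2})/(t)_n, where H_n(x,y) = Σ_{k=0}^n ((t)_n/((t)_k(t)_{n-k})) x^k y^{n-k} are the t-Hermite polynomials and (t)_n = Π_{k=0}^{n-1}(1-t^{k+1})... (t-Pochhammer (t;t)_n), satisfies the boundary relation (t_N^{1/2}a† - t_N^{-1/2}a)|v⟩⟩ = (u_N^{1/2}-u_N^{-1/2})|v⟩⟩ in the Fock representation, i.e. the coefficients satisfy (t)_{k+1}v_{k+1} + t_N^{1/2}(u_N^{1/2}-u_N^{-1/2})(t)_k v_k - t_N(1-t^k)(t)_{k-1}v_{k-1} = 0 with v_{-1}=0. -/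
open Finset

/-- The t-Pochhammer symbol `(t)_n = (t;t)_n = ∏_{k=0}^{n-1}(1 - t^{k+1})`. -/
noncomputable def tPoch (t : ℂ) (n : ℕ) : ℂ := ∏ k ∈ range n, (1 - t ^ (k + 1))

/-- The t-Hermite polynomial
`H_n(x,y) = Σ_{k=0}^n ((t)_n/((t)_k (t)_{n-k})) x^k y^{n-k}`. -/
noncomputable def tHermite (t x y : ℂ) (n : ℕ) : ℂ :=
  ∑ k ∈ range (n + 1), tPoch t n / (tPoch t k * tPoch t (n - k)) * x ^ k * y ^ (n - k)

/-- Action of `a` on coefficient sequences: `(a f)_n = (1 - t^{n+1}) f_{n+1}`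
(coming from `a |k⟩⟩ = (1 - t^k)|k-1⟩⟩`). -/
noncomputable def aSeq (t : ℂ) (f : ℕ → ℂ) : ℕ → ℂ := fun n => (1 - t ^ (n + 1)) * f (n + 1)

/-- Action of `a†` on coefficient sequences: `(a† f)_n = f_{n-1}` for `n ≥ 1`, and
`(a† f)_0 = 0` (coming from `a† |k⟩⟩ = |k+1⟩⟩`). -/
noncomputable def adSeq (f : ℕ → ℂ) : ℕ → ℂ := fun n => if n = 0 then 0 else f (n - 1)

lemma tPoch_zero (t : ℂ) : tPoch t 0 = 1 := by simp [tPoch]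

lemma tPoch_succ (t : ℂ) (n : ℕ) : tPoch t (n + 1) = tPoch t n * (1 - t ^ (n + 1)) := by
  simp [tPoch, prod_range_succ]

noncomputable def tHermiteG (t x y : ℂ) (n : ℕ) : ℂ :=
  ∑ k ∈ range (n + 1), tPoch t n / (tPoch t k * tPoch t (n - k)) * (t ^ k * x ^ k) * y ^ (n - k)

lemma pascal_mid (t : ℂ) (ht : ∀ n, tPoch t n ≠ 0) (j m : ℕ) :
    tPoch t (j + 1 + m + 1) / (tPoch t (j + 1) * tPoch t (m + 1))
      = t ^ (j + 1) * (tPoch t (j + 1 + m) / (tPoch t (j + 1) * tPoch t m))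
        + tPoch t (j + 1 + m) / (tPoch t j * tPoch t (m + 1)) := by
  have h1 : (1 - t ^ (j + 1)) ≠ 0 := by
    have := ht (j + 1); rw [tPoch_succ] at this; exact (mul_ne_zero_iff.mp this).2
  have h2 : (1 - t ^ (m + 1)) ≠ 0 := by
    have := ht (m + 1); rw [tPoch_succ] at this; exact (mul_ne_zero_iff.mp this).2
  have hj := ht j
  have hm := ht m
  rw [tPoch_succ t (j + 1 + m), tPoch_succ t j, tPoch_succ t m]
  field_simp
  ring

lemma pascal_full (t : ℂ) (ht : ∀ n, tPoch t n ≠ 0) (n k : ℕ) (hk : k ≤ n + 1) :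
    tPoch t (n + 1) / (tPoch t k * tPoch t (n + 1 - k))
      = (if k ≤ n then t ^ k * (tPoch t n / (tPoch t k * tPoch t (n - k))) else 0)
        + (if k = 0 then 0 else tPoch t n / (tPoch t (k - 1) * tPoch t (n + 1 - k))) := by
  rcases Nat.eq_zero_or_pos k with hk0 | hk1
  · subst hk0
    simp only [if_pos (Nat.zero_le n), Nat.sub_zero, pow_zero, one_mul, tPoch_zero]
    rw [div_self (ht (n + 1)), div_self (ht n)]
    simp
  rcases eq_or_lt_of_le hk with hke | hklt
  · subst hke
    simp only [if_neg (show ¬ (n + 1 ≤ n) by omega), if_neg (show ¬ (n + 1 = 0) by omega),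
      zero_add, Nat.sub_self, Nat.add_sub_cancel, tPoch_zero, mul_one]
    rw [div_self (ht (n + 1)), div_self (ht n)]
  · -- 1 ≤ k ≤ n
    obtain ⟨j, rfl⟩ : ∃ j, k = j + 1 := ⟨k - 1, by omega⟩
    obtain ⟨m, rfl⟩ : ∃ m, n = j + 1 + m := ⟨n - (j + 1), by omega⟩
    rw [if_pos (by omega), if_neg (by omega)]
    have e1 : j + 1 + m + 1 - (j + 1) = m + 1 := by omega
    have e2 : j + 1 + m - (j + 1) = m := by omega
    have e3 : j + 1 - 1 = j := by omega
    rw [e1, e2, e3]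
    exact pascal_mid t ht j m

lemma hermA (t x y : ℂ) (ht : ∀ n, tPoch t n ≠ 0) (n : ℕ) :
    tHermite t x y (n + 1) = y * tHermiteG t x y n + x * tHermite t x y n := by
  unfold tHermite tHermiteG
  have key : ∀ k ∈ range (n + 2),
      tPoch t (n + 1) / (tPoch t k * tPoch t (n + 1 - k)) * x ^ k * y ^ (n + 1 - k)
        = (if k ≤ n then tPoch t n / (tPoch t k * tPoch t (n - k)) * (t ^ k * x ^ k) * (y * y ^ (n - k)) else 0)
          + (if k = 0 then 0
             else x * (tPoch t n / (tPoch t (k - 1) * tPoch t (n - (k - 1))) * x ^ (k - 1) * y ^ (n - (k - 1)))) := by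
    intro k hk
    rw [mem_range] at hk
    have hk' : k ≤ n + 1 := by omega
    rw [pascal_full t ht n k hk', add_mul, add_mul]
    congr 1
    · by_cases h : k ≤ n
      · rw [if_pos h, if_pos h]
        have : n + 1 - k = (n - k) + 1 := by omega
        rw [this]
        ring
      · rw [if_neg h, if_neg h, zero_mul, zero_mul]
    · by_cases h : k = 0
      · rw [if_pos h, if_pos h, zero_mul, zero_mul]
      · rw [if_neg h, if_neg h]
        have e1 : n - (k - 1) = n + 1 - k := by omega
        have e2 : x ^ k = x * x ^ (k - 1) := by
          conv_lhs => rw [show k = (k - 1) + 1 by omega]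
          ring
        rw [e1, e2]
        ring
  rw [sum_congr rfl key, sum_add_distrib]
  congr 1
  · rw [sum_range_succ, if_neg (by omega), add_zero, mul_sum]
    exact sum_congr rfl fun k hk => by
      rw [mem_range] at hk; rw [if_pos (by omega)]; ring
  · rw [sum_range_succ', if_pos rfl, add_zero, mul_sum]
    exact sum_congr rfl fun k _ => by
      rw [if_neg (by omega)]
      simp only [Nat.add_sub_cancel]

lemma hermB_mid (t : ℂ) (ht : ∀ n, tPoch t n ≠ 0) (j m : ℕ) :
    tPoch t (j + m + 1) / (tPoch t (j + 1) * tPoch t m) * (1 - t ^ (j + 1))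
      = (1 - t ^ (j + m + 1)) * (tPoch t (j + m) / (tPoch t j * tPoch t m)) := by
  have hj := ht j
  have hm := ht m
  have h1 : (1 - t ^ (j + 1)) ≠ 0 := by
    have := ht (j + 1); rw [tPoch_succ] at this; exact (mul_ne_zero_iff.mp this).2
  rw [tPoch_succ t (j + m), tPoch_succ t j]
  field_simp

lemma hermB (t x y : ℂ) (ht : ∀ n, tPoch t n ≠ 0) (m : ℕ) :
    tHermite t x y (m + 1) - tHermiteG t x y (m + 1)
      = (1 - t ^ (m + 1)) * x * tHermite t x y m := by
  unfold tHermite tHermiteG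
  rw [← sum_sub_distrib]
  have key : ∀ k ∈ range (m + 2),
      (tPoch t (m + 1) / (tPoch t k * tPoch t (m + 1 - k)) * x ^ k * y ^ (m + 1 - k)
        - tPoch t (m + 1) / (tPoch t k * tPoch t (m + 1 - k)) * (t ^ k * x ^ k) * y ^ (m + 1 - k))
      = (if k = 0 then 0 else
          (1 - t ^ (m + 1)) * x * (tPoch t m / (tPoch t (k - 1) * tPoch t (m - (k - 1))) * x ^ (k - 1) * y ^ (m - (k - 1)))) := by
    intro k hk
    rw [mem_range] at hk
    by_cases h : k = 0
    · subst h; rw [if_pos rfl]; simp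
    · rw [if_neg h]
      obtain ⟨j, rfl⟩ : ∃ j, k = j + 1 := ⟨k - 1, by omega⟩
      obtain ⟨m', rfl⟩ : ∃ m', m = j + m' := ⟨m - j, by omega⟩
      have e1 : j + m' + 1 - (j + 1) = m' := by omega
      have e2 : j + 1 - 1 = j := by omega
      rw [e1, e2, show j + m' - j = m' from by omega]
      have base := hermB_mid t ht j m'
      have expand : tPoch t (j + m' + 1) / (tPoch t (j + 1) * tPoch t m') * x ^ (j + 1) * y ^ m'
          - tPoch t (j + m' + 1) / (tPoch t (j + 1) * tPoch t m') * (t ^ (j + 1) * x ^ (j + 1)) * y ^ m'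
          = (tPoch t (j + m' + 1) / (tPoch t (j + 1) * tPoch t m') * (1 - t ^ (j + 1))) * x ^ (j + 1) * y ^ m' := by
        ring
      rw [expand, base]
      have : x ^ (j + 1) = x * x ^ j := by ring
      rw [this]
      ring
  rw [sum_congr rfl key, sum_range_succ', if_pos rfl, add_zero, mul_sum]
  exact sum_congr rfl fun k _ => by
    rw [if_neg (by omega)]
    simp only [Nat.add_sub_cancel]

lemma hermRec (t x y : ℂ) (ht : ∀ n, tPoch t n ≠ 0) (m : ℕ) :
    tHermite t x y (m + 2)
      = (x + y) * tHermite t x y (m + 1) - x * y * (1 - t ^ (m + 1)) * tHermite t x y m := by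
  have hA := hermA t x y ht (m + 1)
  have hB := hermB t x y ht m
  rw [hA]
  linear_combination (-y) * hB

lemma herm_zero (t x y : ℂ) : tHermite t x y 0 = 1 := by
  simp [tHermite, tPoch_zero]

lemma herm_one (t x y : ℂ) (ht : ∀ n, tPoch t n ≠ 0) : tHermite t x y 1 = x + y := by
  have h1 : (1 : ℂ) - t ≠ 0 := by
    have := ht 1
    rw [tPoch_succ, tPoch_zero, one_mul, pow_one] at this
    exact this
  unfold tHermite
  rw [sum_range_succ, sum_range_succ, sum_range_zero]
  simp only [Nat.sub_zero, Nat.sub_self, pow_zero, pow_one, tPoch_zero, zero_add]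
  rw [tPoch_succ, tPoch_zero, one_mul, pow_one]
  field_simp
  ring

/-- The vector `|v⟩⟩ = Σ_n v_n |n⟩⟩` with
`v_n = H_n(t_N^{1/2} u_N^{-1/2}, -t_N^{1/2} u_N^{1/2})/(t)_n` satisfies the right
boundary relation `(t_N^{1/2} a† - t_N^{-1/2} a)|v⟩⟩ = (u_N^{1/2} - u_N^{-1/2})|v⟩⟩`
in the Fock representation; equivalently the coefficients satisfy
`(t)_{k+1} v_{k+1} + t_N^{1/2}(u_N^{1/2} - u_N^{-1/2})(t)_k v_k
  - t_N (1 - t^k)(t)_{k-1} v_{k-1} = 0` with `v_{-1} = 0`.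
Here `stN = t_N^{1/2}`, `suN = u_N^{1/2}`. -/
theorem stmt13 (t stN suN : ℂ) (ht : ∀ n, tPoch t n ≠ 0)
    (hstN : stN ≠ 0) (hsuN : suN ≠ 0)
    (v : ℕ → ℂ) (hv : ∀ n, v n = tHermite t (stN * suN⁻¹) (-(stN * suN)) n / tPoch t n) :
    (∀ n, stN * adSeq v n - stN⁻¹ * aSeq t v n = (suN - suN⁻¹) * v n)
      ∧ (∀ k, tPoch t (k + 1) * v (k + 1)
            + stN * (suN - suN⁻¹) * tPoch t k * v k
            - stN ^ 2 * (1 - t ^ k) * (if k = 0 then 0 else tPoch t (k - 1) * v (k - 1))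
          = 0) := by
  set x := stN * suN⁻¹ with hx
  set y := -(stN * suN) with hy
  have hs : suN * suN⁻¹ = 1 := mul_inv_cancel₀ hsuN
  have hs2 : stN⁻¹ * stN = 1 := inv_mul_cancel₀ hstN
  have hHv : ∀ n, tPoch t n * v n = tHermite t x y n := by
    intro n
    rw [hv n, mul_comm, div_mul_cancel₀ _ (ht n)]
  have P2 : ∀ k, tPoch t (k + 1) * v (k + 1)
            + stN * (suN - suN⁻¹) * tPoch t k * v k
            - stN ^ 2 * (1 - t ^ k) * (if k = 0 then 0 else tPoch t (k - 1) * v (k - 1))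
          = 0 := by
    intro k
    cases k with
    | zero =>
      rw [if_pos rfl]
      have h1 := hHv 1
      have h0 := hHv 0
      rw [herm_one t x y ht] at h1
      rw [herm_zero] at h0
      have e0 : tPoch t 0 = 1 := tPoch_zero t
      rw [e0, one_mul] at h0
      -- goal : tPoch t 1 * v 1 + stN*(suN-suN⁻¹)*tPoch t 0*v 0 - stN^2*(1-t^0)*0 = 0
      rw [e0]
      linear_combination h1 + stN * (suN - suN⁻¹) * h0
    | succ m =>
      rw [if_neg (Nat.succ_ne_zero m)]
      simp only [Nat.add_sub_cancel]
      have h2 := hHv (m + 2)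
      have h1 := hHv (m + 1)
      have h0 := hHv m
      have hrec := hermRec t x y ht m
      linear_combination h2 + stN * (suN - suN⁻¹) * h1
        - stN ^ 2 * (1 - t ^ (m + 1)) * h0 + hrec
        + stN ^ 2 * (1 - t ^ (m + 1)) * tHermite t x y m * hs
  refine ⟨?_, P2⟩
  intro n
  cases n with
  | zero =>
    have h := P2 0
    rw [if_pos rfl] at h
    have e1 : tPoch t 1 = 1 - t ^ 1 := by simp [tPoch]
    have e0 : tPoch t 0 = 1 := tPoch_zero t
    rw [e1, e0] at h
    simp only [adSeq, aSeq, reduceIte]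
    linear_combination (-stN⁻¹) * h + ((suN - suN⁻¹) * v 0) * hs2
  | succ m =>
    have h := P2 (m + 1)
    rw [if_neg (Nat.succ_ne_zero m)] at h
    simp only [Nat.add_sub_cancel] at h
    rw [tPoch_succ t (m + 1), tPoch_succ t m] at h
    have hm := ht m
    have hq : (1 - t ^ (m + 1)) ≠ 0 := by
      have := ht (m + 1); rw [tPoch_succ] at this; exact (mul_ne_zero_iff.mp this).2
    have hv2 : (1 - t ^ (m + 1 + 1)) * v (m + 1 + 1)
        = stN ^ 2 * v m - stN * (suN - suN⁻¹) * v (m + 1) := by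
      apply mul_left_cancel₀ (mul_ne_zero hm hq)
      linear_combination h
    simp only [adSeq, aSeq, if_neg (Nat.succ_ne_zero m), Nat.add_sub_cancel]
    rw [hv2]
    linear_combination ((suN - suN⁻¹) * v (m + 1) - stN * v m) * hs2
end

section
/- The ZF-type exchange relation holds for the rank-one vector b(x) = (1/x + a, x + a†)^T: \check{R}(x_2/x_1) (b(x_1) ⊗ b(x_2)) = b(x_2) ⊗ b(x_1), where the tensor product is taken in the ℂ^2 factors and entries multiply in the q-oscillator algebra (with the convention b_1(x_1)b_2(x_2) = component-wise products a-then-a etc.), using only the relation a a† - t a† a = 1 - t. -/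
open Matrix

/-- The vector `b(x) = (1/x + a, x + a†)ᵀ` with entries in the q-oscillator
algebra `A`. -/
noncomputable def bAlg {A : Type*} [Ring A] [Algebra ℂ A] (a ad : A) (x : ℂ) :
    Fin 2 → A :=
  ![algebraMap ℂ A x⁻¹ + a, algebraMap ℂ A x + ad]

set_option maxHeartbeats 1600000 in
/-- The Zamolodchikov–Faddeev exchange relation
`Ř(x₂/x₁) b₁(x₁) b₂(x₂) = b₁(x₂) b₂(x₁)`, using only the q-oscillator relation
`a a† - t a† a = (1 - t)·1` (here `t = st²`). Component `(i,j)` of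
`b₁(x₁) b₂(x₂)` is the algebra element `b(x₁)_i · b(x₂)_j`. -/
theorem stmt15 {A : Type*} [Ring A] [Algebra ℂ A] (st x1 x2 : ℂ) (a ad : A)
    (hosc : a * ad - (st ^ 2) • (ad * a) = (1 - st ^ 2) • (1 : A))
    (ht : st ≠ 0) (h1 : x1 ≠ 0) (h2 : x2 ≠ 0)
    (hden : st⁻¹ * (x2 / x1) - st ≠ 0) :
    ∀ ij : Fin 2 × Fin 2,
      ∑ kl : Fin 2 × Fin 2,
          RcheckP st (x2 / x1) ij kl • (bAlg a ad x1 kl.1 * bAlg a ad x2 kl.2)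
        = bAlg a ad x2 ij.1 * bAlg a ad x1 ij.2 := by
  have hA : a * ad = (1 - st ^ 2) • (1 : A) + (st ^ 2) • (ad * a) := by
    rw [sub_eq_iff_eq_add] at hosc; exact hosc
  have halg : ∀ c : ℂ, algebraMap ℂ A c = c • (1 : A) :=
    fun c => Algebra.algebraMap_eq_smul_one c
  have hne : x2 - st ^ 2 * x1 ≠ 0 := by
    intro h
    apply hden
    field_simp
    linear_combination h
  have hr : rFun st (x2/x1) = st * (x2 - x1) / (x2 - st ^ 2 * x1) := by
    rw [rFun, div_eq_div_iff hden hne]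
    field_simp
  have hr2 : rFun st (x2 * x1⁻¹) = st * (x2 - x1) / (x2 - st ^ 2 * x1) := by
    rw [← div_eq_mul_inv]; exact hr
  have hr3 : rFun st (x1⁻¹ * x2) = st * (x2 - x1) / (x2 - st ^ 2 * x1) := by
    rw [mul_comm, ← div_eq_mul_inv]; exact hr
  have hu : (x2 - st ^ 2 * x1) * (x2 - st ^ 2 * x1)⁻¹ = 1 := mul_inv_cancel₀ hne
  have hne' : x2 - x1 * st ^ 2 ≠ 0 := by rw [mul_comm]; exact hne
  have hv : (x2 - x1 * st ^ 2) * (x2 - x1 * st ^ 2)⁻¹ = 1 := mul_inv_cancel₀ hne'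
  have h1' : x1 * x1⁻¹ = 1 := mul_inv_cancel₀ h1
  have h2' : x2 * x2⁻¹ = 1 := mul_inv_cancel₀ h2
  have ht' : st * st⁻¹ = 1 := mul_inv_cancel₀ ht
  intro ij
  rw [Fintype.sum_prod_type]
  fin_cases ij <;>
    simp only [RcheckP, wMatP, bAlg, Fin.sum_univ_two, Matrix.add_apply,
      Matrix.smul_apply, Matrix.one_apply, Matrix.single, Matrix.of_apply,
      Prod.mk.injEq, halg, Matrix.cons_val_zero, Matrix.cons_val_one, Matrix.head_cons,
      Prod.ext_iff] <;>
    norm_num <;>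
    simp only [mul_add, add_mul, smul_mul_assoc, mul_smul_comm, one_mul, mul_one,
      smul_add, smul_smul, hA] <;>
    match_scalars <;>
    · try simp only [hr, hr2, hr3]
      try ring
      try linear_combination (-(x2) * (x2 - x1) * (x2 - st ^ 2 * x1)⁻¹) * ht'
            - (x2 - x1) * hu
      try linear_combination (-(x1⁻¹) * (x2 - x1) * (x2 - st ^ 2 * x1)⁻¹) * ht'
            - ((x2 - x1) * x1⁻¹ * x2⁻¹) * hu
            + ((x2 - x1) * (x2 - st ^ 2 * x1)⁻¹ * x1⁻¹ - x1⁻¹) * h2'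
            + (x2⁻¹ - st ^ 2 * (x2 - x1) * (x2 - st ^ 2 * x1)⁻¹ * x2⁻¹) * h1'
      try linear_combination (-(st ^ 2) * (x2 - x1) * (x2 - st ^ 2 * x1)⁻¹) * ht'
      try linear_combination
            ((x2 - x1) * (x2 - st ^ 2 * x1)⁻¹ * (st ^ 2 - 1 - x2 * x1⁻¹)) * ht'
              - ((x2 - x1) * (x1⁻¹ + x2⁻¹)) * hu
              + (1 - st ^ 2 * (x2 - x1) * (x2 - st ^ 2 * x1)⁻¹) * h1'
              + ((x2 - x1) * (x2 - st ^ 2 * x1)⁻¹ - 1) * h2'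
      try linear_combination
            ((x2 - x1) * (x2 - st ^ 2 * x1)⁻¹ * (x2 * x1⁻¹ + 1 - st ^ 2)) * ht'
              + ((x2 - x1) * (x1⁻¹ + x2⁻¹)) * hu
              + (st ^ 2 * (x2 - x1) * (x2 - st ^ 2 * x1)⁻¹ - 1) * h1'
              + (1 - (x2 - x1) * (x2 - st ^ 2 * x1)⁻¹) * h2'
      try linear_combination (x2 * (x2 - x1) * (x2 - st ^ 2 * x1)⁻¹) * ht'
            + (x2 - x1) * hu
      try linear_combination ((x2 - x1) * (x2 - st ^ 2 * x1)⁻¹ * x1⁻¹) * ht'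
            + ((x2 - x1) * x1⁻¹ * x2⁻¹) * hu
            + (x1⁻¹ - (x2 - x1) * (x2 - st ^ 2 * x1)⁻¹ * x1⁻¹) * h2'
            + ((x2 - x1) * (x2 - st ^ 2 * x1)⁻¹ * st ^ 2 * x2⁻¹ - x2⁻¹) * h1'
      try linear_combination (st ^ 2 * (x2 - x1) * (x2 - st ^ 2 * x1)⁻¹) * ht'
      try linear_combination
            ((x2 - x1) * (x2 - x1 * st ^ 2)⁻¹ * (st ^ 2 - 1 - x2 * x1⁻¹)) * ht'
              - ((x2 - x1) * (x1⁻¹ + x2⁻¹)) * hv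
              + (1 - st ^ 2 * (x2 - x1) * (x2 - x1 * st ^ 2)⁻¹) * h1'
              + ((x2 - x1) * (x2 - x1 * st ^ 2)⁻¹ - 1) * h2'
      try linear_combination
            ((x2 - x1) * (x2 - x1 * st ^ 2)⁻¹ * (x2 * x1⁻¹ + 1 - st ^ 2)) * ht'
              + ((x2 - x1) * (x1⁻¹ + x2⁻¹)) * hv
              + (st ^ 2 * (x2 - x1) * (x2 - x1 * st ^ 2)⁻¹ - 1) * h1'
              + (1 - (x2 - x1) * (x2 - x1 * st ^ 2)⁻¹) * h2'
      try (field_simp; ring)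
end

section
/- Suppose the components ψ_τ (indexed by τ ∈ {0,1}^N, Laurent polynomials in x_1,…,x_N) satisfy the exchange relations T_i ψ_{…10…} = t^{-1/2} ψ_{…01…} at positions (i,i+1), T_i ψ_{…00…} = t^{1/2}ψ_{…00…}, T_i ψ_{…11…} = t^{1/2}ψ_{…11…}, T_0 ψ_{0…} = ξ^{-1}t_0^{-1/2}ψ_{1…}, and T_N ψ_{…1} = t_N^{-1/2}ψ_{…0}, with the Noumi-representation operators T_0,…,T_N. Then the empty-configuration component ψ_{0…0} satisfies Y_i ψ_{0…0} = ξ^{-1}t_0^{-1/2}t_N^{-1/2}t^{-(i-1)} ψ_{0…0}, where Y_i = T_i⋯T_{N-1}T_N T_{N-1}⋯T_0 T_1^{-1}⋯T_{i-1}^{-1}. -/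
set_option maxHeartbeats 8000000


/-- The Cherednik element
`Y_i = T_i ⋯ T_{N-1} · T_N · T_{N-1} ⋯ T_1 T_0 · T_1⁻¹ ⋯ T_{i-1}⁻¹`
built from operators `T_0, …, T_N`, where the inverses are realised (via the
quadratic Hecke relations) as `T_j⁻¹ = T_j - (t^{1/2} - t^{-1/2})`; `st = t^{1/2}`. -/
noncomputable def Yop {F V : Type*} [Field F] [AddCommGroup V] [Module F V]
    (T : ℕ → Module.End F V) (st : F) (N i : ℕ) : Module.End F V :=
  ((List.range' i (N - i)).map T).prod * T N * (((List.range N).reverse).map T).prod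
    * ((List.range' 1 (i - 1)).map fun j => T j - (st - st⁻¹) • 1).prod

/-- If the components `ψ_τ` satisfy the qKZ exchange relations
`T_0 ψ_{0…} = ξ⁻¹ t_0^{-1/2} ψ_{1…}`, `T_N ψ_{…1} = t_N^{-1/2} ψ_{…0}`,
`T_i ψ_{…00…} = t^{1/2} ψ_{…00…}`, `T_i ψ_{…11…} = t^{1/2} ψ_{…11…}` and
`T_i ψ_{…10…} = t^{-1/2} ψ_{…01…}` (marked sites at positions `i, i+1`), with the
operators satisfying the quadratic Hecke relations, then the empty-lattice
component `ψ_{0…0}` is an eigenfunction of the `Y_i`: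
`Y_i ψ_{0…0} = ξ⁻¹ t_0^{-1/2} t_N^{-1/2} t^{-(i-1)} ψ_{0…0}`.
Lattice of `N = n+1` sites; `st = t^{1/2}`, `st0 = t_0^{1/2}`, `stN = t_N^{1/2}`. -/
theorem stmt17 {F V : Type*} [Field F] [AddCommGroup V] [Module F V]
    (n : ℕ) (st st0 stN ξ : F)
    (ht : st ≠ 0) (ht0 : st0 ≠ 0) (htN : stN ≠ 0) (hξ : ξ ≠ 0)
    (T : ℕ → Module.End F V)
    (ψ : (Fin (n + 1) → Fin 2) → V)
    (hquad0 : ∀ v, T 0 (T 0 v) = (st0 - st0⁻¹) • T 0 v + v)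
    (hquad : ∀ i : ℕ, 1 ≤ i → i ≤ n → ∀ v, T i (T i v) = (st - st⁻¹) • T i v + v)
    (hquadN : ∀ v, T (n + 1) (T (n + 1) v) = (stN - stN⁻¹) • T (n + 1) v + v)
    (hex0 : ∀ τ : Fin (n + 1) → Fin 2, τ 0 = 0 →
      T 0 (ψ τ) = (ξ⁻¹ * st0⁻¹) • ψ (Function.update τ 0 1))
    (hexN : ∀ τ : Fin (n + 1) → Fin 2, τ (Fin.last n) = 1 →
      T (n + 1) (ψ τ) = stN⁻¹ • ψ (Function.update τ (Fin.last n) 0))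
    (h00 : ∀ (i : Fin n) (τ : Fin (n + 1) → Fin 2), τ i.castSucc = 0 → τ i.succ = 0 →
      T ((i : ℕ) + 1) (ψ τ) = st • ψ τ)
    (h11 : ∀ (i : Fin n) (τ : Fin (n + 1) → Fin 2), τ i.castSucc = 1 → τ i.succ = 1 →
      T ((i : ℕ) + 1) (ψ τ) = st • ψ τ)
    (h10 : ∀ (i : Fin n) (τ : Fin (n + 1) → Fin 2), τ i.castSucc = 1 → τ i.succ = 0 →
      T ((i : ℕ) + 1) (ψ τ)
        = st⁻¹ • ψ (Function.update (Function.update τ i.castSucc 0) i.succ 1)) :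
    ∀ i : ℕ, 1 ≤ i → i ≤ n + 1 →
      Yop T st (n + 1) i (ψ fun _ => 0)
        = (ξ⁻¹ * st0⁻¹ * stN⁻¹ * (st⁻¹) ^ (2 * (i - 1))) • ψ fun _ => 0 := by
  intro i hi1 hi2
  set ψ0 : V := ψ (fun _ => 0) with hψ0
  have hTj : ∀ j : ℕ, 1 ≤ j → j ≤ n → T j ψ0 = st • ψ0 := by
    intro j h1 h2
    have := h00 ⟨j - 1, by omega⟩ (fun _ => 0) rfl rfl
    simpa [show j - 1 + 1 = j from by omega] using this
  -- the front chain
  have hA : ∀ k j : ℕ, 1 ≤ j → j + k ≤ n + 1 →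
      (((List.range' j k).map T).prod) ψ0 = st ^ k • ψ0 := by
    intro k
    induction k with
    | zero => intro j _ _; simp
    | succ k ih =>
      intro j h1 h2
      rw [List.range'_succ, List.map_cons, List.prod_cons, Module.End.mul_apply,
        ih (j + 1) (by omega) (by omega), map_smul, hTj j h1 (by omega),
        smul_smul, ← pow_succ]
  -- the inverse chain
  have hC : ∀ k j : ℕ, 1 ≤ j → j + k ≤ n + 1 →
      (((List.range' j k).map fun j => T j - (st - st⁻¹) • 1).prod) ψ0
        = (st⁻¹) ^ k • ψ0 := by
    intro k
    induction k with
    | zero => intro j _ _; simp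
    | succ k ih =>
      intro j h1 h2
      rw [List.range'_succ, List.map_cons, List.prod_cons, Module.End.mul_apply,
        ih (j + 1) (by omega) (by omega), map_smul, LinearMap.sub_apply,
        LinearMap.smul_apply, Module.End.one_apply, hTj j h1 (by omega), pow_succ]
      module
  -- the middle chain
  have hB : ∀ m : ℕ, (hm : m ≤ n) →
      ((((List.range (m + 1)).reverse).map T).prod) ψ0
        = ((ξ⁻¹ * st0⁻¹) * (st⁻¹) ^ m) •
            ψ (Function.update (fun _ => 0) (⟨m, by omega⟩ : Fin (n + 1)) 1) := by
    intro m
    induction m with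
    | zero =>
      intro _
      have := hex0 (fun _ => 0) rfl
      simpa using this
    | succ m ih =>
      intro hm
      rw [List.range_succ, List.reverse_append, List.reverse_singleton,
        List.singleton_append, List.map_cons, List.prod_cons, Module.End.mul_apply,
        ih (by omega), map_smul]
      have hfin : (⟨m, by omega⟩ : Fin n).castSucc = (⟨m, by omega⟩ : Fin (n + 1)) := rfl
      have hfin2 : (⟨m, by omega⟩ : Fin n).succ = (⟨m + 1, by omega⟩ : Fin (n + 1)) := rfl
      have hne : (⟨m + 1, by omega⟩ : Fin (n + 1)) ≠ (⟨m, by omega⟩ : Fin (n + 1)) := by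
        simp [Fin.ext_iff]
      have h1 := h10 ⟨m, by omega⟩
        (Function.update (fun _ => 0) (⟨m, by omega⟩ : Fin (n + 1)) 1)
        (by rw [hfin]; simp) (by rw [hfin2]; rw [Function.update_of_ne hne])
      rw [hfin, hfin2, Function.update_idem] at h1
      have hz : Function.update (fun _ : Fin (n + 1) => (0 : Fin 2))
          (⟨m, by omega⟩ : Fin (n + 1)) 0 = fun _ => 0 := by
        funext x; rcases eq_or_ne x (⟨m, by omega⟩ : Fin (n + 1)) with h | h
        · rw [h, Function.update_self]
        · rw [Function.update_of_ne h]
      rw [hz] at h1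
      rw [h1, smul_smul, pow_succ]
      congr 1
      ring
  -- T_N step
  have hlast : Fin.last n = (⟨n, by omega⟩ : Fin (n + 1)) := rfl
  have hTNe : T (n + 1) (ψ (Function.update (fun _ => 0) (⟨n, by omega⟩ : Fin (n + 1)) 1))
      = stN⁻¹ • ψ0 := by
    have := hexN (Function.update (fun _ => 0) (⟨n, by omega⟩ : Fin (n + 1)) 1)
      (by rw [hlast]; simp)
    rw [hlast, Function.update_idem] at this
    have hz : Function.update (fun _ : Fin (n + 1) => (0 : Fin 2))
        (⟨n, by omega⟩ : Fin (n + 1)) 0 = fun _ => 0 := by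
      funext x; rcases eq_or_ne x (⟨n, by omega⟩ : Fin (n + 1)) with h | h
      · rw [h, Function.update_self]
      · rw [Function.update_of_ne h]
    rw [hz] at this
    exact this
  -- combine
  have e1 : (((List.range' 1 (i - 1)).map fun j => T j - (st - st⁻¹) • 1).prod) ψ0
      = (st⁻¹) ^ (i - 1) • ψ0 := hC (i - 1) 1 le_rfl (by omega)
  have e2 := hB n le_rfl
  have e3 := hA (n + 1 - i) i hi1 (by omega)
  unfold Yop
  rw [Module.End.mul_apply, Module.End.mul_apply, Module.End.mul_apply, e1]
  simp only [map_smul]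
  rw [e2]
  simp only [map_smul]
  rw [hTNe]
  simp only [map_smul]
  rw [e3, smul_smul, smul_smul, smul_smul]
  congr 1
  have key : st ^ (n + 1 - i) * (st⁻¹ ^ n * st⁻¹ ^ (i - 1)) = st⁻¹ ^ (2 * (i - 1)) := by
    rw [← pow_add, show n + (i - 1) = (n + 1 - i) + 2 * (i - 1) from by omega,
      pow_add, ← mul_assoc, ← mul_pow, mul_inv_cancel₀ ht, one_pow, one_mul]
  rw [← key]
  ring
end

section
/- For any partition λ = (m^N) (all parts equal to m ≥ 0), the eigenvalue of the Koornwinder difference operator D is d_{(m^N)} = Σ_{i=1}^N [t_0 t_N t^{2N-i-1}(s^m - 1) + t^{i-1}(s^{-m}-1)], and upon substituting s = ξ^{1/m} this equals d_0(ξ) = ((1-t^N)/(1-t)) (ξ-1)(t_0 t_N t^{N-1} - 1/ξ); moreover d_0(ξ) is invariant under the Gallavotti–Cohen substitution ξ → ξ' = t_0^{-1}t_N^{-1}t^{-(N-1)}ξ^{-1}, i.e. d_0(ξ') = d_0(ξ). -/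
open Finset

/-- The eigenvalue of the Koornwinder difference operator `D` for a partition
`λ`: `d_λ = Σ_{i=1}^N [t_0 t_N t^{2N-i-1}(s^{λ_i} - 1) + t^{i-1}(s^{-λ_i} - 1)]`,
written here for `λ = (m^N)` with the index shifted to `i ∈ {0,…,N-1}`. -/
noncomputable def dEig (N : ℕ) (t t0 tN s : ℂ) (m : ℕ) : ℂ :=
  ∑ i ∈ range N,
    (t0 * tN * t ^ (2 * N - i - 2) * (s ^ m - 1) + t ^ i * ((s ^ m)⁻¹ - 1))

/-- The limiting eigenvalue
`d₀(ξ) = ((1 - t^N)/(1 - t)) (ξ - 1)(t_0 t_N t^{N-1} - 1/ξ)`. -/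
noncomputable def dZero (N : ℕ) (t t0 tN ξ : ℂ) : ℂ :=
  (1 - t ^ N) / (1 - t) * (ξ - 1) * (t0 * tN * t ^ (N - 1) - ξ⁻¹)

/-! The exponents `2N - i - 2`, `i < N`, run through `range N` backwards, shifted by `N - 1`,
so with `c = t₀ t_N t^{N-1}` the eigenvalue `d_{(m^N)}` is the geometric sum `∑ t^i` times
`c(ξ - 1) + (ξ⁻¹ - 1) = (ξ - 1)(c - ξ⁻¹) = (ξ - 1)(cξ - 1)/ξ`,
and the last expression is visibly invariant under `ξ ↦ (cξ)⁻¹`. -/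

theorem sum_range_pow_two_mul_sub_sub_two {R : Type*} [CommSemiring R] (x : R) (N : ℕ) :
    ∑ i ∈ range N, x ^ (2 * N - i - 2) = x ^ (N - 1) * ∑ i ∈ range N, x ^ i := by
  rw [mul_sum, ← sum_range_reflect]
  refine sum_congr rfl fun i hi => ?_
  rw [← pow_add]
  congr 1
  have := mem_range.mp hi
  omega

theorem geom_sum_eq_one_sub_div {K : Type*} [Field K] {x : K} (hx : x ≠ 1) (n : ℕ) :
    ∑ i ∈ range n, x ^ i = (1 - x ^ n) / (1 - x) := by
  rw [geom_sum_eq hx, ← neg_div_neg_eq, neg_sub, neg_sub]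

section Koornwinder

variable {N : ℕ} {t t0 tN : ℂ}

theorem dEig_eq_geom_sum_mul (s : ℂ) (m : ℕ) :
    dEig N t t0 tN s m =
      (∑ i ∈ range N, t ^ i) * (t0 * tN * t ^ (N - 1) * (s ^ m - 1) + ((s ^ m)⁻¹ - 1)) := by
  rw [dEig, sum_add_distrib, ← sum_mul, ← mul_sum, ← sum_mul,
    sum_range_pow_two_mul_sub_sub_two]
  ring

theorem dEig_eq_dZero (ht1 : t ≠ 1) {s : ℂ} {m : ℕ} (hsm : s ^ m ≠ 0) :
    dEig N t t0 tN s m = dZero N t t0 tN (s ^ m) := by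
  have h1t : 1 - t ≠ 0 := sub_ne_zero.2 ht1.symm
  rw [dEig_eq_geom_sum_mul, geom_sum_eq_one_sub_div ht1, dZero]
  field_simp
  ring

theorem dZero_inv_mul_eq {ξ : ℂ} (hc : t0 * tN * t ^ (N - 1) ≠ 0) (hξ : ξ ≠ 0) :
    dZero N t t0 tN (t0 * tN * t ^ (N - 1) * ξ)⁻¹ = dZero N t t0 tN ξ := by
  rw [dZero, dZero, inv_inv]
  generalize t0 * tN * t ^ (N - 1) = c at hc ⊢
  field_simp
  ring

end Koornwinder

theorem stmt19_general (N : ℕ) (t t0 tN s ξ : ℂ)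
    (ht : t ≠ 0) (ht1 : t ≠ 1) (ht0 : t0 ≠ 0) (htN : tN ≠ 0) (hξ : ξ ≠ 0)
    (m : ℕ) (hsm : s ^ m = ξ) :
    dEig N t t0 tN s m = dZero N t t0 tN ξ
      ∧ dZero N t t0 tN (t0⁻¹ * tN⁻¹ * (t ^ (N - 1))⁻¹ * ξ⁻¹) = dZero N t t0 tN ξ := by
  subst hsm
  refine ⟨dEig_eq_dZero ht1 hξ, ?_⟩
  rw [← mul_inv, ← mul_inv, ← mul_inv]
  exact dZero_inv_mul_eq (by simp [ht, ht0, htN]) hξ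

/-- For `λ = (m^N)` the Koornwinder eigenvalue `d_{(m^N)}`, with `s^m = ξ`
(i.e. `s = ξ^{1/m}`), equals `d₀(ξ)`; moreover `d₀` is invariant under the
Gallavotti–Cohen substitution `ξ → ξ' = t_0⁻¹ t_N⁻¹ t^{-(N-1)} ξ⁻¹`. -/
theorem stmt19 (N : ℕ) (hN : 1 ≤ N) (t t0 tN s ξ : ℂ)
    (ht : t ≠ 0) (ht1 : t ≠ 1) (ht0 : t0 ≠ 0) (htN : tN ≠ 0) (hs : s ≠ 0) (hξ : ξ ≠ 0)
    (m : ℕ) (hm : 1 ≤ m) (hsm : s ^ m = ξ) :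
    dEig N t t0 tN s m = dZero N t t0 tN ξ
      ∧ dZero N t t0 tN (t0⁻¹ * tN⁻¹ * (t ^ (N - 1))⁻¹ * ξ⁻¹) = dZero N t t0 tN ξ :=
  stmt19_general N t t0 tN s ξ ht ht1 ht0 htN hξ m hsm
end
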